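/- Let S be a finite set of tuples, each contributing a term ∏_{j=1}^q \bar{c}_{m_j} c_{n_j} A_{m_j n_j} with |A_{m_j n_j}| ≤ ‖A‖, where ∑_m |c_m|² = 1. Suppose each index m appears at most 𝒩 times among the coordinates of all tuples in S. Then |∑_{Λ ∈ S} ∏_{j=1}^q \bar{c}_{m_j} c_{n_j} A_{m_j n_j}| ≤ (‖A‖^q 𝒩 / (2q)) · ∑_m |c_m|^{2q}. -/

import Mathlib

open Finset

/-!
Each term is at most `a ^ q ∏ⱼ ‖c mⱼ‖ ‖c nⱼ‖`, and AM-GM over these `2q` factors bounds the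
product by the mean of their `2q`-th powers. Summing over `S`, each `‖c m‖ ^ (2q)` is collected
once per occurrence of `m` in a tuple, hence at most `𝒩` times.
-/

lemma prod_le_sum_pow_card_div_card {κ : Type*} [Fintype κ] [Nonempty κ]
    (x : κ → ℝ) (hx : ∀ i, 0 ≤ x i) :
    ∏ i, x i ≤ (∑ i, x i ^ Fintype.card κ) / Fintype.card κ := by
  set k := Fintype.card κ
  have hk : (k : ℝ) ≠ 0 := by positivity
  have hroot : ∀ i, (x i ^ k) ^ (k : ℝ)⁻¹ = x i := fun i =>
    Real.pow_rpow_inv_natCast (hx i) (by positivity)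
  calc ∏ i, x i = ∏ i, (x i ^ k) ^ (k : ℝ)⁻¹ := by simp only [hroot]
    _ ≤ ∑ i, (k : ℝ)⁻¹ * x i ^ k :=
        Real.geom_mean_le_arith_mean_weighted univ _ _ (fun _ _ => by positivity)
          (by simp [k, hk]) (fun i _ => pow_nonneg (hx i) k)
    _ = (∑ i, x i ^ k) / k := by rw [← mul_sum, inv_mul_eq_div]

lemma prod_mul_le_sum_pow_add_pow {κ : Type*} [Fintype κ] [Nonempty κ]
    (x y : κ → ℝ) (hx : ∀ i, 0 ≤ x i) (hy : ∀ i, 0 ≤ y i) :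
    ∏ i, x i * y i ≤
      (∑ i, (x i ^ (2 * Fintype.card κ) + y i ^ (2 * Fintype.card κ))) /
        (2 * Fintype.card κ) := by
  have hcard : Fintype.card (κ ⊕ κ) = 2 * Fintype.card κ := by
    rw [Fintype.card_sum, two_mul]
  have h := prod_le_sum_pow_card_div_card (Sum.elim x y) (Sum.rec hx hy)
  rw [hcard, Fintype.prod_sum_type, Fintype.sum_sum_type] at h
  simpa only [Sum.elim_inl, Sum.elim_inr, ← prod_mul_distrib, ← sum_add_distrib,
    Nat.cast_mul, Nat.cast_ofNat] using h

lemma norm_prod_conj_mul_mul_le {κ ι : Type*} [Fintype κ] [Nonempty κ]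
    (c : ι → ℂ) (A : ι → ι → ℂ) {a : ℝ} (hA : ∀ m n, ‖A m n‖ ≤ a) (Λ : κ → ι × ι) :
    ‖∏ j, (starRingEnd ℂ) (c (Λ j).1) * c (Λ j).2 * A (Λ j).1 (Λ j).2‖ ≤
      a ^ Fintype.card κ / (2 * Fintype.card κ) *
        ∑ j, (‖c (Λ j).1‖ ^ (2 * Fintype.card κ) + ‖c (Λ j).2‖ ^ (2 * Fintype.card κ)) := by
  obtain ⟨j₀⟩ := ‹Nonempty κ›
  have ha : 0 ≤ a := (norm_nonneg _).trans (hA (Λ j₀).1 (Λ j₀).2)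
  calc ‖∏ j, (starRingEnd ℂ) (c (Λ j).1) * c (Λ j).2 * A (Λ j).1 (Λ j).2‖
      ≤ ∏ j, a * (‖c (Λ j).1‖ * ‖c (Λ j).2‖) := by
        rw [norm_prod]
        refine prod_le_prod (fun _ _ => norm_nonneg _) fun j _ => ?_
        rw [norm_mul, norm_mul, Complex.norm_conj, mul_comm]
        gcongr
        exact hA _ _
    _ = a ^ Fintype.card κ * ∏ j, ‖c (Λ j).1‖ * ‖c (Λ j).2‖ := by
        rw [prod_mul_distrib, prod_const, card_univ]
    _ ≤ _ := by
        rw [div_mul_eq_mul_div, mul_div_assoc]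
        gcongr
        exact prod_mul_le_sum_pow_add_pow _ _ (fun _ => norm_nonneg _) fun _ => norm_nonneg _

lemma sum_comp_eq_sum_card_filter_smul {κ ι R : Type*} [Fintype κ] [Fintype ι] [DecidableEq ι]
    [AddCommMonoid R] (v : κ → ι) (g : ι → R) :
    ∑ j, g (v j) = ∑ m, #{j | v j = m} • g m := by
  rw [← sum_fiberwise' univ v g]
  simp only [sum_const]

lemma sum_sum_fst_add_snd_le {κ ι : Type*} [Fintype κ] [Fintype ι] [DecidableEq ι]
    (S : Finset (κ → ι × ι)) (g : ι → ℝ) (hg : ∀ m, 0 ≤ g m) (N : ℕ)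
    (hcount : ∀ m, ∑ Λ ∈ S, (#{j | (Λ j).1 = m} + #{j | (Λ j).2 = m}) ≤ N) :
    ∑ Λ ∈ S, ∑ j, (g (Λ j).1 + g (Λ j).2) ≤ N * ∑ m, g m := by
  calc ∑ Λ ∈ S, ∑ j, (g (Λ j).1 + g (Λ j).2)
      = ∑ m, (∑ Λ ∈ S, (#{j | (Λ j).1 = m} + #{j | (Λ j).2 = m})) • g m := by
        have hfiber : ∀ Λ : κ → ι × ι, ∑ j, (g (Λ j).1 + g (Λ j).2) =
            ∑ m, (#{j | (Λ j).1 = m} + #{j | (Λ j).2 = m}) • g m := fun Λ => by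
          simp only [add_smul, sum_add_distrib,
            sum_comp_eq_sum_card_filter_smul (fun j => (Λ j).1),
            sum_comp_eq_sum_card_filter_smul (fun j => (Λ j).2)]
        simp only [hfiber, sum_smul]
        exact sum_comm
    _ ≤ ∑ m, N * g m := by
        gcongr with m
        rw [nsmul_eq_mul]
        exact mul_le_mul_of_nonneg_right (by exact_mod_cast hcount m) (hg m)
    _ = N * ∑ m, g m := (mul_sum ..).symm

theorem violation_sum_bound_general {ι : Type*} [Fintype ι] [DecidableEq ι] (q : ℕ) (hq : 1 ≤ q)
    (S : Finset (Fin q → ι × ι)) (c : ι → ℂ) (A : ι → ι → ℂ) (a : ℝ) (𝒩 : ℕ)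
    (hA : ∀ m n, ‖A m n‖ ≤ a)
    (hcount : ∀ m : ι,
      (∑ Λ ∈ S, (((univ : Finset (Fin q)).filter fun j => (Λ j).1 = m).card
        + ((univ : Finset (Fin q)).filter fun j => (Λ j).2 = m).card)) ≤ 𝒩) :
    ‖∑ Λ ∈ S, ∏ j, (starRingEnd ℂ) (c (Λ j).1) * c (Λ j).2 * A (Λ j).1 (Λ j).2‖
      ≤ a ^ q * 𝒩 / (2 * q) * ∑ m, ‖c m‖ ^ (2 * q) := by
  have : Nonempty (Fin q) := ⟨⟨0, hq⟩⟩
  rcases isEmpty_or_nonempty ι with _ | ⟨⟨m₀⟩⟩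
  · simp [S.eq_empty_of_isEmpty]
  have ha : 0 ≤ a := (norm_nonneg _).trans (hA m₀ m₀)
  calc ‖∑ Λ ∈ S, ∏ j, (starRingEnd ℂ) (c (Λ j).1) * c (Λ j).2 * A (Λ j).1 (Λ j).2‖
      ≤ ∑ Λ ∈ S, ‖∏ j, (starRingEnd ℂ) (c (Λ j).1) * c (Λ j).2 * A (Λ j).1 (Λ j).2‖ :=
        norm_sum_le _ _
    _ ≤ ∑ Λ ∈ S, a ^ q / (2 * q) * ∑ j, (‖c (Λ j).1‖ ^ (2 * q) + ‖c (Λ j).2‖ ^ (2 * q)) :=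
        sum_le_sum fun Λ _ => by simpa only [Fintype.card_fin] using norm_prod_conj_mul_mul_le c A hA Λ
    _ = a ^ q / (2 * q) * ∑ Λ ∈ S, ∑ j, (‖c (Λ j).1‖ ^ (2 * q) + ‖c (Λ j).2‖ ^ (2 * q)) :=
        (mul_sum ..).symm
    _ ≤ a ^ q / (2 * q) * (𝒩 * ∑ m, ‖c m‖ ^ (2 * q)) := by
        gcongr
        exact sum_sum_fst_add_snd_le S (fun m => ‖c m‖ ^ (2 * q)) (fun _ => by positivity) 𝒩 hcount
    _ = a ^ q * 𝒩 / (2 * q) * ∑ m, ‖c m‖ ^ (2 * q) := by ring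

/-- Bound on the contribution of resonance violations: if `S` is a finite set of tuples
`Λ = (m_1, n_1, …, m_q, n_q)` (encoded as maps `Fin q → ι × ι`), the matrix elements satisfy
`‖A m n‖ ≤ a`, the state is normalized, and every index `m` appears at most `𝒩` times among
the coordinates of tuples of `S`, then
`‖∑_{Λ ∈ S} ∏_j conj (c (m_j)) * c (n_j) * A (m_j) (n_j)‖ ≤ (a^q 𝒩 / (2q)) ∑_m ‖c m‖^(2q)`. -/
theorem violation_sum_bound {ι : Type*} [Fintype ι] [DecidableEq ι] (q : ℕ) (hq : 1 ≤ q)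
    (S : Finset (Fin q → ι × ι)) (c : ι → ℂ) (A : ι → ι → ℂ) (a : ℝ) (𝒩 : ℕ)
    (hA : ∀ m n, ‖A m n‖ ≤ a)
    (hnorm : ∑ m, ‖c m‖ ^ 2 = 1)
    (hcount : ∀ m : ι,
      (∑ Λ ∈ S, (((univ : Finset (Fin q)).filter fun j => (Λ j).1 = m).card
        + ((univ : Finset (Fin q)).filter fun j => (Λ j).2 = m).card)) ≤ 𝒩) :
    ‖∑ Λ ∈ S, ∏ j, (starRingEnd ℂ) (c (Λ j).1) * c (Λ j).2 * A (Λ j).1 (Λ j).2‖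
      ≤ a ^ q * 𝒩 / (2 * q) * ∑ m, ‖c m‖ ^ (2 * q) :=
  violation_sum_bound_general q hq S c A a 𝒩 hA hcount
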